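/- arXiv:math/0405224 — 2 statements merged into one kernel-verified Lean document; each statement's English description precedes it below -/
import Mathlib

section
/- Fix a base point z₀ ∈ ℍ × ℍ and a point z = (z₁,z₂) ∈ ℍ × ℍ. Let ξ = (ξ₁,ξ₂) ∈ ∂ℍ × ∂ℍ, let g = (g₁,g₂) ∈ G = PSL(2,ℝ) × PSL(2,ℝ), let T ∈ ℝ, and let a = (a₁, 1) ∈ A with a₁ = ±diag(λ,λ⁻¹) ≠ 1. If there are infinitely many positive integers n such that β_ξ(g·aⁿ·z, z₀) > T (i.e. g·aⁿ·z lies in the horoball HB(ξ,T)), then ξ₁ = g₁(a₁⁺), where a₁⁺ is the attractive fixed point of a₁ in ∂ℍ (a₁⁺ = ∞ if λ > 1 and a₁⁺ = 0 if λ < 1). Symmetrically, if a = (1, a₂) with a₂ = ±diag(λ,λ⁻¹) ≠ 1, the same hypothesis implies ξ₂ = g₂(a₂⁺). -/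
noncomputable section

open Matrix MatrixGroups MeasureTheory Filter Topology OnePoint
open scoped UpperHalfPlane

/-- `SL(2, ℝ)`. -/
abbrev SL2 : Type := Matrix.SpecialLinearGroup (Fin 2) ℝ

/-- `PSL(2, ℝ) = SL(2, ℝ)/{±1}`, the quotient of `SL(2, ℝ)` by its center. -/
abbrev PSL2 : Type := Matrix.ProjectiveSpecialLinearGroup (Fin 2) ℝ

/-- Topology on `SL(2, ℝ)`, induced from the space of matrices. -/
instance : TopologicalSpace SL2 :=
  TopologicalSpace.induced (fun g : SL2 => (g : Matrix (Fin 2) (Fin 2) ℝ)) inferInstance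

/-- The quotient topology on `PSL(2, ℝ)`. -/
instance : TopologicalSpace PSL2 := instTopologicalSpaceQuotient

instance : MeasurableSpace PSL2 := borel PSL2

/-- The group `G = PSL(2, ℝ) × PSL(2, ℝ)`. -/
abbrev G2 : Type := PSL2 × PSL2

/-- The projection `SL(2, ℝ) → PSL(2, ℝ)`. -/
def pr : SL2 →* PSL2 := QuotientGroup.mk' (Subgroup.center SL2)

/-- A representative in `SL(2, ℝ)` of an element of `PSL(2, ℝ)`.  (All the constructions
below built from `rep` are in fact independent of the choice of representative, because the
two lifts of an element of `PSL(2, ℝ)` differ only by sign.) -/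
def rep (x : PSL2) : SL2 := Quotient.out x

/-- The boundary `∂ℍ = ℝ ∪ {∞}` of the upper half-plane. -/
abbrev Bdry : Type := OnePoint ℝ

/-- The extended Möbius action of `SL(2, ℝ)` on `∂ℍ = ℝ ∪ {∞}`. -/
def mobSL (g : SL2) (p : Bdry) : Bdry :=
  p.elim (if g 1 0 = 0 then ∞ else ((g 0 0 / g 1 0 : ℝ) : Bdry))
    (fun x => if g 1 0 * x + g 1 1 = 0 then ∞
      else (((g 0 0 * x + g 0 1) / (g 1 0 * x + g 1 1) : ℝ) : Bdry))

/-- The extended Möbius action of `PSL(2, ℝ)` on the boundary `∂ℍ = ℝ ∪ {∞}`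
(independent of the choice of representative, since `-g` and `g` act alike). -/
def mob (x : PSL2) (p : Bdry) : Bdry := mobSL (rep x) p

/-- The Möbius action of `PSL(2, ℝ)` on the upper half-plane `ℍ`
(independent of the choice of representative, since `-g` and `g` act alike). -/
def hact (x : PSL2) (z : ℍ) : ℍ := rep x • z

/-- The componentwise action of `G` on `ℍ × ℍ`. -/
def hact2 (x : G2) (z : ℍ × ℍ) : ℍ × ℍ := (hact x.1 z.1, hact x.2 z.2)

/-- The componentwise action of `G` on the Furstenberg boundary `F = ∂ℍ × ∂ℍ`. -/
def mob2 (x : G2) (ξ : Bdry × Bdry) : Bdry × Bdry := (mob x.1 ξ.1, mob x.2 ξ.2)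

/-- The diagonal matrix `diag (exp t, exp (-t))` in `SL(2, ℝ)`; as `t` ranges over `ℝ`,
these (together with their negatives) are exactly the diagonal matrices `±diag (λ, λ⁻¹)`
with `λ > 0`. -/
def dm (t : ℝ) : SL2 :=
  ⟨!![Real.exp t, 0; 0, Real.exp (-t)], by
    simp [Matrix.det_fin_two_of, ← Real.exp_add]⟩

lemma dm_mul (t s : ℝ) : dm t * dm s = dm (t + s) := by
  apply Subtype.ext
  rw [Matrix.SpecialLinearGroup.coe_mul]
  simp only [dm]
  rw [Matrix.mul_fin_two]
  norm_num [← Real.exp_add]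
  ring_nf

lemma dm_zero : dm 0 = 1 := by
  apply Subtype.ext
  simp [dm, Matrix.one_fin_two]

/-- The maximal diagonal subgroup `A` of `G = PSL(2, ℝ) × PSL(2, ℝ)`. -/
def Adiag : Subgroup G2 where
  carrier := {x | ∃ t s : ℝ, x = (pr (dm t), pr (dm s))}
  mul_mem' := by
    rintro _ _ ⟨t, s, rfl⟩ ⟨t', s', rfl⟩
    exact ⟨t + t', s + s', by simp [Prod.ext_iff, ← _root_.map_mul, dm_mul]⟩
  one_mem' := ⟨0, 0, by simp [dm_zero, Prod.ext_iff]⟩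
  inv_mem' := by
    rintro _ ⟨t, s, rfl⟩
    refine ⟨-t, -s, ?_⟩
    have h1 : dm (-t) * dm t = 1 := by rw [dm_mul]; simpa using dm_zero
    have h2 : dm (-s) * dm s = 1 := by rw [dm_mul]; simpa using dm_zero
    simp [Prod.ext_iff, eq_comm, eq_inv_iff_mul_eq_one, ← _root_.map_mul, h1, h2]

/-- The diagonal sub-semigroup `A⁺` of `G` (diagonal entries `λᵢ = exp tᵢ ≥ 1`). -/
def Apos : Set G2 := {x | ∃ t s : ℝ, 0 ≤ t ∧ 0 ≤ s ∧ x = (pr (dm t), pr (dm s))}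

/-- The absolute value of the trace, well defined on `PSL(2, ℝ)`. -/
def trAbs (x : PSL2) : ℝ := |((rep x : Matrix (Fin 2) (Fin 2) ℝ)).trace|

/-- An element of `PSL(2, ℝ)` is hyperbolic if `|trace| > 2`. -/
def IsHyperbolicPSL (x : PSL2) : Prop := 2 < trAbs x

/-- An element of `PSL(2, ℝ)` is parabolic if it is nontrivial and `|trace| = 2`. -/
def IsParabolicPSL (x : PSL2) : Prop := x ≠ 1 ∧ trAbs x = 2

/-- An element of `PSL(2, ℝ)` is elliptic if `|trace| < 2`. -/
def IsEllipticPSL (x : PSL2) : Prop := trAbs x < 2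

/-- The dominant eigenvalue `(|tr| + √(tr² - 4))/2` of (a lift of) an element of
`PSL(2, ℝ)`; for a hyperbolic element this is its dominant (> 1) eigenvalue. -/
def domEig (x : PSL2) : ℝ := (trAbs x + Real.sqrt (trAbs x ^ 2 - 4)) / 2

/-- An element of `G` is hyperbolic if both components are. -/
def IsHyperbolicG (γ : G2) : Prop := IsHyperbolicPSL γ.1 ∧ IsHyperbolicPSL γ.2

/-- An element of `G` is parabolic if both components are. -/
def IsParabolicG (γ : G2) : Prop := IsParabolicPSL γ.1 ∧ IsParabolicPSL γ.2

/-- An element of `G` is elliptic if both components are. -/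
def IsEllipticG (γ : G2) : Prop := IsEllipticPSL γ.1 ∧ IsEllipticPSL γ.2

/-- A nontrivial element of `G` is mixed if its two components are not of the same kind. -/
def IsMixed (γ : G2) : Prop :=
  γ ≠ 1 ∧ ¬ IsHyperbolicG γ ∧ ¬ IsParabolicG γ ∧ ¬ IsEllipticG γ

/-- A hyperbolic element of `G` is hyper-regular if the dominant eigenvalues of its two
components are distinct. -/
def IsHyperRegular (γ : G2) : Prop := IsHyperbolicG γ ∧ domEig γ.1 ≠ domEig γ.2

/-- `Γ` is an irreducible lattice of `G = PSL(2, ℝ) × PSL(2, ℝ)`: it is discrete, of finite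
covolume for Haar measure, both coordinate projections have dense image, and `Γ` meets the
kernel of each coordinate projection trivially. -/
structure IsIrreducibleLattice (Γ : Subgroup G2) : Prop where
  discrete : DiscreteTopology Γ
  finiteCovolume : ∃ μ : Measure G2, μ.IsHaarMeasure ∧
    ∃ s : Set G2, IsFundamentalDomain Γ s μ ∧ μ s < ⊤
  dense_fst : Dense (Prod.fst '' (Γ : Set G2))
  dense_snd : Dense (Prod.snd '' (Γ : Set G2))
  ker_fst : ∀ γ ∈ Γ, γ.1 = 1 → γ = 1
  ker_snd : ∀ γ ∈ Γ, γ.2 = 1 → γ = 1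

/-- The quotient `Γ \ G` by right cosets, with the quotient topology. -/
abbrev RQ (Γ : Subgroup G2) : Type := Quotient (QuotientGroup.rightRel Γ)

/-- The class `Γ g` of `g` in `Γ \ G`. -/
def rmk (Γ : Subgroup G2) (g : G2) : RQ Γ := Quotient.mk (QuotientGroup.rightRel Γ) g

/-- The orbit `x A` of `x = Γ g` in `Γ \ G` under right translation by `A`. -/
def orbA (Γ : Subgroup G2) (g : G2) : Set (RQ Γ) := {y | ∃ a ∈ Adiag, y = rmk Γ (g * a)}

/-- The semi-orbit `x A⁺` of `x = Γ g` in `Γ \ G` under right translation by `A⁺`. -/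
def orbApos (Γ : Subgroup G2) (g : G2) : Set (RQ Γ) := {y | ∃ a ∈ Apos, y = rmk Γ (g * a)}

/-- The inclusion `ℍ ⊆ ℂ ∪ {∞}` into the one-point compactification of `ℂ`. -/
def hToC (z : ℍ) : OnePoint ℂ := ((z : ℂ) : OnePoint ℂ)

/-- The inclusion `∂ℍ = ℝ ∪ {∞} ⊆ ℂ ∪ {∞}`. -/
def bToC (p : Bdry) : OnePoint ℂ := OnePoint.map (fun x : ℝ => (x : ℂ)) p

/-- The Busemann cocycle `β_ξ(x, y)` on `ℍ`, for `ξ ∈ ∂ℍ = ℝ ∪ {∞}`: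
`β_∞(x, y) = log (Im x / Im y)` and
`β_s(x, y) = log ((Im x / |x - s|²) · (|y - s|² / Im y))` for `s ∈ ℝ`. -/
def buse (ξ : Bdry) (x y : ℍ) : ℝ :=
  ξ.elim (Real.log (x.im / y.im))
    (fun s => Real.log ((x.im / Complex.normSq ((x : ℂ) - (s : ℂ))) *
      (Complex.normSq ((y : ℂ) - (s : ℂ)) / y.im)))

/-- The Busemann cocycle on `ℍ × ℍ`, the sum of the Busemann cocycles of the factors. -/
def buse2 (ξ : Bdry × Bdry) (z w : ℍ × ℍ) : ℝ := buse ξ.1 z.1 w.1 + buse ξ.2 z.2 w.2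

/-! The second factor of `g aⁿ z` is the constant `g₂ z₂`, so the Busemann sum tends to `-∞` as
soon as its first summand does. With the Poisson kernel `P(x, ∞) = Im x`,
`P(x, s) = Im x / |x - s|²` one has `β_ξ(x, y) = log (P(x, ξ) / P(y, ξ))`, and `P(xₙ, ξ) → 0`
whenever `xₙ` converges, on the Riemann sphere, to a boundary point other than `ξ`. Finally
`aⁿ z = e^{2nt} z` tends to the attracting fixed point `a⁺`, so by continuity of the Möbius action
on the closed half-plane `g aⁿ z → g(a⁺)`; hence `β_ξ(g aⁿ z, z₀) → -∞` unless `ξ = g(a⁺)`. -/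

open Bornology (cobounded)

namespace UpperHalfPlane

lemma smul_eq_self_of_mem_center {c : SL2} (hc : c ∈ Subgroup.center SL2) (w : ℍ) :
    c • w = w := by
  obtain ⟨r, hr, hrc⟩ := Matrix.SpecialLinearGroup.mem_center_iff.mp hc
  have hr0 : (r : ℂ) ≠ 0 := Complex.ofReal_ne_zero.mpr (by rintro rfl; simp at hr)
  ext
  rw [coe_specialLinearGroup_apply, ← hrc]
  simp [hr0]

lemma coe_SL2_smul (h : SL2) (w : ℍ) :
    ((h • w : ℍ) : ℂ) = (h 0 0 * w + h 0 1) / (h 1 0 * w + h 1 1) := by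
  rw [coe_specialLinearGroup_apply]
  rfl

lemma normSq_sub_ofReal_pos (x : ℍ) (s : ℝ) : 0 < Complex.normSq ((x : ℂ) - s) :=
  Complex.normSq_pos.mpr (sub_ne_zero.mpr (x.ne_ofReal s))

lemma im_div_normSq_sub_le (x : ℍ) (s : ℝ) :
    x.im / Complex.normSq ((x : ℂ) - s) ≤ ‖(x : ℂ) - s‖⁻¹ := by
  have hpos : 0 < ‖(x : ℂ) - s‖ := by
    simpa [← Complex.normSq_pos, sq] using x.normSq_sub_ofReal_pos s
  rw [Complex.normSq_eq_norm_sq, div_le_iff₀ (by positivity)]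
  calc x.im ≤ ‖(x : ℂ) - s‖ := by simpa using Complex.im_le_norm ((x : ℂ) - s)
    _ = ‖(x : ℂ) - s‖⁻¹ * ‖(x : ℂ) - s‖ ^ 2 := by field_simp

lemma ofReal_mul_add_ne_zero (x : ℍ) {c : ℝ} (hc : c ≠ 0) (d : ℝ) : (c : ℂ) * x + d ≠ 0 := by
  intro h
  have him := congrArg Complex.im h
  simp only [Complex.add_im, Complex.im_ofReal_mul, Complex.ofReal_im, add_zero, coe_im,
    Complex.zero_im] at him
  exact mul_ne_zero hc x.im_ne_zero him

def poissonKernel (x : ℍ) (ξ : Bdry) : ℝ :=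
  ξ.elim x.im (fun s => x.im / Complex.normSq ((x : ℂ) - s))

lemma poissonKernel_pos (x : ℍ) (ξ : Bdry) : 0 < x.poissonKernel ξ := by
  induction ξ using OnePoint.rec with
  | infty => exact x.im_pos
  | coe s => exact div_pos x.im_pos (x.normSq_sub_ofReal_pos s)

end UpperHalfPlane

lemma buse_eq_log_div (ξ : Bdry) (x y : ℍ) :
    buse ξ x y = Real.log (x.poissonKernel ξ / y.poissonKernel ξ) := by
  induction ξ using OnePoint.rec with
  | infty => rfl
  | coe s =>
    simp only [buse, UpperHalfPlane.poissonKernel, OnePoint.elim_some, div_div_eq_mul_div,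
      mul_div_assoc]

lemma hact_pr (h : SL2) (w : ℍ) : hact (pr h) w = h • w := by
  have hc : h⁻¹ * rep (pr h) ∈ Subgroup.center SL2 :=
    QuotientGroup.eq.mp (Quotient.out_eq (pr h)).symm
  rw [hact, ← mul_inv_cancel_left h (rep (pr h)), mul_smul,
    UpperHalfPlane.smul_eq_self_of_mem_center hc]

lemma hact_one (w : ℍ) : hact 1 w = w := by
  simpa using hact_pr 1 w

lemma pr_dm_pow (t : ℝ) (n : ℕ) : pr (dm t) ^ n = pr (dm (n * t)) := by
  rw [← map_pow]
  congr 1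
  induction n with
  | zero => simp [dm_zero]
  | succ n ih => rw [pow_succ, ih, dm_mul]; push_cast; ring_nf

lemma coe_dm_smul (s : ℝ) (w : ℍ) :
    ((dm s • w : ℍ) : ℂ) = (Real.exp (2 * s) : ℂ) * w := by
  rw [UpperHalfPlane.coe_SL2_smul]
  simp only [dm, of_apply, cons_val', cons_val_zero, cons_val_one, cons_val_fin_one,
    Complex.ofReal_exp, Complex.ofReal_neg, Complex.ofReal_mul, Complex.ofReal_ofNat,
    Complex.ofReal_zero, zero_mul, add_zero, zero_add]
  rw [div_eq_iff (Complex.exp_ne_zero _), mul_right_comm, ← Complex.exp_add]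
  ring_nf

section Convergence

variable {α : Type*} {l : Filter α} {x : α → ℍ}

lemma tendsto_hToC_infty_iff :
    Tendsto (fun n => hToC (x n)) l (𝓝 ∞) ↔ Tendsto (fun n => (x n : ℂ)) l (cobounded ℂ) := by
  rw [Metric.cobounded_eq_cocompact, ← coclosedCompact_eq_cocompact,
    ← OnePoint.comap_coe_nhds_infty, tendsto_comap_iff]
  rfl

lemma tendsto_hToC_coe_iff {w : ℂ} :
    Tendsto (fun n => hToC (x n)) l (𝓝 (w : OnePoint ℂ)) ↔
      Tendsto (fun n => (x n : ℂ)) l (𝓝 w) := by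
  rw [← OnePoint.comap_coe_nhds w, tendsto_comap_iff]
  rfl

lemma tendsto_poissonKernel_zero {p ξ : Bdry}
    (hx : Tendsto (fun n => hToC (x n)) l (𝓝 (bToC p))) (hξ : ξ ≠ p) :
    Tendsto (fun n => (x n).poissonKernel ξ) l (𝓝 0) := by
  induction p using OnePoint.rec with
  | infty =>
    induction ξ using OnePoint.rec with
    | infty => exact absurd rfl hξ
    | coe s =>
      have hsub := (tendsto_sub_const_cobounded (s : ℂ)).comp (tendsto_hToC_infty_iff.mp hx)
      exact squeeze_zero (fun n => ((x n).poissonKernel_pos _).le)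
        (fun n => (x n).im_div_normSq_sub_le s)
        (tendsto_norm_cobounded_atTop.comp hsub).inv_tendsto_atTop
  | coe r =>
    replace hx : Tendsto (fun n => (x n : ℂ)) l (𝓝 r) := tendsto_hToC_coe_iff.mp hx
    have him : Tendsto (fun n => (x n).im) l (𝓝 0) := by
      simpa [Function.comp_def] using (Complex.continuous_im.tendsto _).comp hx
    induction ξ using OnePoint.rec with
    | infty => exact him
    | coe s =>
      have hrs : Complex.normSq ((r : ℂ) - s) ≠ 0 := by
        refine (Complex.normSq_pos.mpr (sub_ne_zero.mpr ?_)).ne'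
        exact_mod_cast fun h : r = s => hξ (h ▸ rfl)
      have hd : Tendsto (fun n => Complex.normSq ((x n : ℂ) - s)) l
          (𝓝 (Complex.normSq ((r : ℂ) - s))) :=
        (Complex.continuous_normSq.tendsto _).comp (hx.sub_const _)
      show Tendsto (fun n => (x n).im / Complex.normSq ((x n : ℂ) - s)) l (𝓝 0)
      simpa only [zero_div, Pi.div_def] using him.div hd hrs

lemma tendsto_buse_atBot {p ξ : Bdry}
    (hx : Tendsto (fun n => hToC (x n)) l (𝓝 (bToC p))) (hξ : ξ ≠ p) (y : ℍ) :
    Tendsto (fun n => buse ξ (x n) y) l atBot := by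
  simp only [buse_eq_log_div]
  refine Real.tendsto_log_nhdsGT_zero.comp (tendsto_nhdsWithin_iff.mpr ⟨?_, ?_⟩)
  · simpa using (tendsto_poissonKernel_zero hx hξ).div_const (y.poissonKernel ξ)
  · exact .of_forall fun n => div_pos ((x n).poissonKernel_pos ξ) (y.poissonKernel_pos ξ)

lemma tendsto_hToC_smul_of_tendsto_cobounded (h : SL2)
    (hx : Tendsto (fun n => (x n : ℂ)) l (cobounded ℂ)) :
    Tendsto (fun n => hToC (h • x n)) l (𝓝 (bToC (mobSL h ∞))) := by
  set a := h 0 0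
  set b := h 0 1
  set c := h 1 0
  set d := h 1 1
  have hdet : a * d - b * c = 1 := by rw [← h.2, det_fin_two]
  have hsmul (n : α) : ((h • x n : ℍ) : ℂ) = (a * x n + b) / (c * x n + d) :=
    UpperHalfPlane.coe_SL2_smul h (x n)
  show Tendsto _ l (𝓝 (bToC (if c = 0 then ∞ else _)))
  by_cases hc : c = 0
  · have had : a * d = 1 := by simpa [hc] using hdet
    have ha : (a : ℂ) ≠ 0 := by exact_mod_cast left_ne_zero_of_mul_eq_one had
    have hd : (d : ℂ) ≠ 0 := by exact_mod_cast right_ne_zero_of_mul_eq_one had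
    rw [if_pos hc]
    refine tendsto_hToC_infty_iff.mpr ?_
    simp only [hsmul, hc, Complex.ofReal_zero, zero_mul, zero_add,
      div_eq_mul_inv]
    exact (tendsto_mul_right_cobounded (inv_ne_zero hd)).comp
      ((tendsto_add_const_cobounded _).comp ((tendsto_mul_left_cobounded ha).comp hx))
  · rw [if_neg hc]
    refine tendsto_hToC_coe_iff.mpr ?_
    have hinv : Tendsto (fun n => (x n : ℂ)⁻¹) l (𝓝 0) := tendsto_inv₀_cobounded.comp hx
    have hlim := ((hinv.const_mul (b : ℂ)).const_add (a : ℂ)).div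
      ((hinv.const_mul (d : ℂ)).const_add (c : ℂ)) (by simpa using hc)
    simp only [mul_zero, add_zero] at hlim
    push_cast
    refine hlim.congr fun n => ?_
    rw [Pi.div_apply, hsmul]
    have hx0 := (x n).ne_zero
    field_simp

lemma tendsto_hToC_smul_of_tendsto_ofReal (h : SL2) {r : ℝ}
    (hx : Tendsto (fun n => (x n : ℂ)) l (𝓝 r)) :
    Tendsto (fun n => hToC (h • x n)) l (𝓝 (bToC (mobSL h r))) := by
  set a := h 0 0
  set b := h 0 1
  set c := h 1 0
  set d := h 1 1
  have hdet : a * d - b * c = 1 := by rw [← h.2, det_fin_two]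
  have hsmul (n : α) : ((h • x n : ℍ) : ℂ) = (a * x n + b) / (c * x n + d) :=
    UpperHalfPlane.coe_SL2_smul h (x n)
  have hnum : Tendsto (fun n => (a : ℂ) * x n + b) l (𝓝 (a * r + b)) :=
    (hx.const_mul _).add_const _
  have hden : Tendsto (fun n => (c : ℂ) * x n + d) l (𝓝 (c * r + d)) :=
    (hx.const_mul _).add_const _
  show Tendsto _ l (𝓝 (bToC (if c * r + d = 0 then ∞ else _)))
  by_cases hr : c * r + d = 0
  · have hc : c ≠ 0 := by
      intro hc0
      have hd0 : d = 0 := by simpa [hc0] using hr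
      simp [hc0, hd0] at hdet
    have har : (a : ℂ) * r + b ≠ 0 := by
      have : -c * (a * r + b) = 1 := by linear_combination hdet - a * hr
      exact_mod_cast right_ne_zero_of_mul_eq_one this
    rw [if_pos hr]
    refine tendsto_hToC_infty_iff.mpr ?_
    have hzero : Tendsto (fun n => ((c : ℂ) * x n + d) / (a * x n + b)) l (𝓝[≠] 0) := by
      refine tendsto_nhdsWithin_iff.mpr ⟨?_, ?_⟩
      · simpa [Pi.div_def, ← Complex.ofReal_mul, ← Complex.ofReal_add, hr] using
          hden.div hnum har
      · filter_upwards [hnum.eventually_ne har] with n hn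
        exact div_ne_zero ((x n).ofReal_mul_add_ne_zero hc d) hn
    simpa only [hsmul, inv_div, Function.comp_def] using
      tendsto_inv₀_nhdsNE_zero.comp hzero
  · rw [if_neg hr]
    refine tendsto_hToC_coe_iff.mpr ?_
    simp only [hsmul]
    push_cast
    exact hnum.div hden (by exact_mod_cast hr)

lemma tendsto_hToC_smul (h : SL2) {p : Bdry}
    (hx : Tendsto (fun n => hToC (x n)) l (𝓝 (bToC p))) :
    Tendsto (fun n => hToC (h • x n)) l (𝓝 (bToC (mobSL h p))) := by
  induction p using OnePoint.rec with
  | infty => exact tendsto_hToC_smul_of_tendsto_cobounded h (tendsto_hToC_infty_iff.mp hx)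
  | coe r => exact tendsto_hToC_smul_of_tendsto_ofReal h (tendsto_hToC_coe_iff.mp hx)

end Convergence

lemma tendsto_hToC_dm_smul (z : ℍ) {t : ℝ} (ht : t ≠ 0) :
    Tendsto (fun n : ℕ => hToC (dm (n * t) • z)) atTop
      (𝓝 (bToC (if 0 < t then ∞ else ((0 : ℝ) : Bdry)))) := by
  rcases ht.lt_or_gt with hneg | hpos
  · rw [if_neg hneg.not_gt]
    refine tendsto_hToC_coe_iff.mpr ?_
    have hexp : Tendsto (fun n : ℕ => Real.exp (2 * (n * t))) atTop (𝓝 0) :=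
      Real.tendsto_exp_atBot.comp
        ((tendsto_natCast_atTop_atTop.atTop_mul_const_of_neg hneg).const_mul_atBot two_pos)
    simpa [coe_dm_smul] using ((Complex.continuous_ofReal.tendsto 0).comp hexp).mul_const (z : ℂ)
  · rw [if_pos hpos]
    refine tendsto_hToC_infty_iff.mpr ?_
    have hexp : Tendsto (fun n : ℕ => Real.exp (2 * (n * t))) atTop atTop :=
      Real.tendsto_exp_atTop.comp
        ((tendsto_natCast_atTop_atTop.atTop_mul_const hpos).const_mul_atTop two_pos)
    simpa [coe_dm_smul, Function.comp_def] using (tendsto_mul_right_cobounded z.ne_zero).comp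
      ((RCLike.tendsto_ofReal_atTop_cobounded ℂ).comp hexp)

lemma tendsto_buse_hact_pow_atBot (g : PSL2) (z y : ℍ) {t : ℝ} (ht : t ≠ 0) {ξ : Bdry}
    (hξ : ξ ≠ mob g (if 0 < t then ∞ else ((0 : ℝ) : Bdry))) :
    Tendsto (fun n : ℕ => buse ξ (hact g (hact (pr (dm t) ^ n) z)) y) atTop atBot := by
  simp only [pr_dm_pow, hact_pr]
  exact tendsto_buse_atBot (tendsto_hToC_smul (rep g) (tendsto_hToC_dm_smul z ht)) hξ y

lemma finite_setOf_lt_of_tendsto_atBot {β : Type*} [LinearOrder β] [NoMinOrder β] {f : ℕ → β}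
    (hf : Tendsto f atTop atBot) (T : β) : {n | T < f n}.Finite := by
  have hfin := hf.eventually_lt_atBot T
  rw [← Nat.cofinite_eq_atTop, eventually_cofinite] at hfin
  exact hfin.subset fun n hn => not_lt.mpr hn.le

/-- **Lemma (base point of a horoball).**  Fix `z₀, z ∈ ℍ × ℍ`, `ξ = (ξ₁, ξ₂) ∈ ∂ℍ × ∂ℍ`,
`g = (g₁, g₂) ∈ G` and `T ∈ ℝ`.  If `a = (a₁, 1) ∈ A` with `a₁ = ±diag (λ, λ⁻¹) ≠ 1`
(`λ = exp t`, `t ≠ 0`) and the horoball `HB(ξ, T) = {w : β_ξ(w, z₀) > T}` contains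
infinitely many of the points `g aⁿ z` (`n > 0`), then `ξ₁ = g₁(a₁⁺)` where `a₁⁺` is the
attractive fixed point of `a₁` (namely `∞` if `λ > 1`, and `0` if `λ < 1`).
Symmetrically for `a = (1, a₂)`. -/
theorem horoball_basepoint (z₀ z : ℍ × ℍ) (ξ : Bdry × Bdry) (g : G2) (T : ℝ) :
    (∀ t : ℝ, t ≠ 0 →
      {n : ℕ | 0 < n ∧
        T < buse2 ξ (hact2 g (hact2 (((pr (dm t), 1) : G2) ^ n) z)) z₀}.Infinite →
      ξ.1 = mob g.1 (if 0 < t then ∞ else ((0 : ℝ) : Bdry))) ∧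
    (∀ t : ℝ, t ≠ 0 →
      {n : ℕ | 0 < n ∧
        T < buse2 ξ (hact2 g (hact2 (((1, pr (dm t)) : G2) ^ n) z)) z₀}.Infinite →
      ξ.2 = mob g.2 (if 0 < t then ∞ else ((0 : ℝ) : Bdry))) := by
  refine ⟨fun t ht hinf => ?_, fun t ht hinf => ?_⟩
  all_goals
    by_contra hne
    refine hinf ((finite_setOf_lt_of_tendsto_atBot ?_ T).subset fun n hn => hn.2)
    simp only [buse2, hact2, Prod.pow_mk, one_pow, hact_one]
  · exact tendsto_atBot_add_const_right _ _ (tendsto_buse_hact_pow_atBot g.1 z.1 z₀.1 ht hne)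
  · exact tendsto_atBot_add_const_left _ _ (tendsto_buse_hact_pow_atBot g.2 z.2 z₀.2 ht hne)
end
end

section
/- Let Γ be an irreducible lattice of G = PSL(2,ℝ) × PSL(2,ℝ), let g ∈ G and let x = Γg ∈ Γ\G. If the subgroup g⁻¹Γg ∩ A is nontrivial, then the map Ψ_x : (g⁻¹Γg ∩ A)\A → Γ\G, sending the coset (g⁻¹Γg ∩ A)a to Γga, is proper (preimages of compact sets are compact); in particular the orbit xA is closed in Γ\G. -/
noncomputable section

open Matrix MatrixGroups MeasureTheory Filter Topology OnePoint
open scoped UpperHalfPlane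

/-- The subgroup `g⁻¹ Γ g ∩ A` of `G`. -/
def Lam (Γ : Subgroup G2) (g : G2) : Subgroup G2 :=
  Subgroup.map (MulAut.conj g⁻¹).toMonoidHom Γ ⊓ Adiag

/-- The quotient `(g⁻¹ Γ g ∩ A) \ A`, with the quotient topology. -/
abbrev DQ (Γ : Subgroup G2) (g : G2) : Type :=
  Quotient (QuotientGroup.rightRel ((Lam Γ g).subgroupOf Adiag))

/-- The natural map `Ψ_x : (g⁻¹ Γ g ∩ A) \ A → Γ \ G`, `(g⁻¹ Γ g ∩ A) a ↦ Γ g a`;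
it is continuous and injective, with image the orbit `x A` of `x = Γ g`. -/
def Psi (Γ : Subgroup G2) (g : G2) : DQ Γ g → RQ Γ :=
  Quotient.lift (fun a : Adiag => rmk Γ (g * (a : G2))) (by
    intro a b hab
    have hmem : ((b * a⁻¹ : Adiag) : G2) ∈ Lam Γ g :=
      (Subgroup.mem_subgroupOf).mp (QuotientGroup.rightRel_apply.mp hab)
    obtain ⟨γ, hγΓ, hγ⟩ := hmem.1
    refine Quotient.sound (QuotientGroup.rightRel_apply.mpr ?_)
    have hco : ((b * a⁻¹ : Adiag) : G2) = (b : G2) * (a : G2)⁻¹ := rfl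
    have key : (g * (b : G2)) * (g * (a : G2))⁻¹ = γ := by
      have hγ' : g⁻¹ * γ * g = (b : G2) * (a : G2)⁻¹ := by
        simpa [MulAut.conj_apply, hco] using hγ
      have : (g * (b : G2)) * (g * (a : G2))⁻¹ = g * ((b : G2) * (a : G2)⁻¹) * g⁻¹ := by
        group
      rw [this, ← hγ']
      group
    rw [key]
    exact hγΓ)


/-!
Pick `l ≠ 1` in `Λ = g⁻¹Γg ∩ A`. Irreducibility makes both components of `l` nontrivial, and the
centralizer in `PSL(2, ℝ)` of a nontrivial diagonal element is the diagonal group, so the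
centralizer of `l` in `G` is exactly `A`. Now let `γ g a` (`γ ∈ Γ`, `a ∈ A`) lie in a compact
set `L`, and put `δ = g⁻¹γg`. Since `a` commutes with `l`, the conjugate `δ l δ⁻¹` lies both in
the compact set of conjugates of `l` by `g⁻¹L` and in the discrete group `g⁻¹Γg`: it takes only
finitely many values. Fixing one `δ_μ` per value `μ`, the element `δ_μ⁻¹ δ` centralizes `l`,
so lies in `Λ`, and moves `a` into the compact set `⋃ μ, δ_μ⁻¹ g⁻¹ L`. Hence `Ψ⁻¹ K` is a closed
subset of the image of a compact subset of `A`. Finally `Γ \ G` is locally compact and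
Hausdorff, so the proper map `Ψ` is closed and its image `x A` is closed.
-/

theorem IsOpenMap.exists_isCompact_image_superset {X Y : Type*} [TopologicalSpace X]
    [TopologicalSpace Y] [WeaklyLocallyCompactSpace X] {f : X → Y} (hf : IsOpenMap f)
    (hsurj : Function.Surjective f) {K : Set Y} (hK : IsCompact K) :
    ∃ L, IsCompact L ∧ K ⊆ f '' L := by
  choose x hx using hsurj
  choose V hVc hVn using fun y => exists_compact_mem_nhds (x y)
  obtain ⟨t, -, hKt⟩ := hK.elim_nhds_subcover (fun y => f '' V y) fun y _ => by
    simpa only [hx] using hf.image_mem_nhds (hVn y)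
  refine ⟨⋃ y ∈ t, V y, t.finite_toSet.isCompact_biUnion fun y _ => hVc y, ?_⟩
  rw [Set.image_iUnion₂]
  exact hKt

instance QuotientGroup.t2Space_rightRel {H : Type*} [Group H] [TopologicalSpace H]
    [IsTopologicalGroup H] (Γ : Subgroup H) [IsClosed (Γ : Set H)] :
    T2Space (Quotient (QuotientGroup.rightRel Γ)) :=
  t2Space_quotient_mulAction_of_properSMul

instance : IsTopologicalGroup SL2 := Matrix.SpecialLinearGroup.topologicalGroup

instance : T2Space SL2 := Matrix.SpecialLinearGroup.isClosedEmbedding_val.isEmbedding.t2Space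

instance : LocallyCompactSpace SL2 :=
  haveI : LocallyCompactSpace (Matrix (Fin 2) (Fin 2) ℝ) :=
    inferInstanceAs (LocallyCompactSpace (Fin 2 → Fin 2 → ℝ))
  Matrix.SpecialLinearGroup.isClosedEmbedding_val.locallyCompactSpace

instance : IsClosed (Subgroup.center SL2 : Set SL2) := by
  rw [Subgroup.coe_center, ← Set.centralizer_univ]
  exact Set.isClosed_centralizer _

lemma pr_eq_pr_iff {X Y : SL2} :
    pr X = pr Y ↔ ∃ r : ℝ, r ^ 2 = 1 ∧
      (Y : Matrix (Fin 2) (Fin 2) ℝ) = r • (X : Matrix (Fin 2) (Fin 2) ℝ) := by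
  rw [pr, QuotientGroup.mk'_apply, QuotientGroup.mk'_apply, QuotientGroup.eq,
    Matrix.SpecialLinearGroup.mem_center_iff, Fintype.card_fin]
  refine exists_congr fun r => and_congr_right fun _ => ?_
  rw [Matrix.scalar_apply, ← Matrix.smul_one_eq_diagonal]
  constructor
  · intro h
    rw [← mul_inv_cancel_left X Y, Matrix.SpecialLinearGroup.coe_mul, ← h, Matrix.mul_smul,
      mul_one]
  · intro h
    rw [Matrix.SpecialLinearGroup.coe_mul, h, Matrix.mul_smul, ← Matrix.SpecialLinearGroup.coe_mul,
      inv_mul_cancel, Matrix.SpecialLinearGroup.coe_one]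

lemma coe_dm (t : ℝ) :
    (dm t : Matrix (Fin 2) (Fin 2) ℝ) = Matrix.diagonal ![Real.exp t, Real.exp (-t)] := by
  ext i j
  fin_cases i <;> fin_cases j <;> simp [dm]

lemma commute_pr_dm (t s : ℝ) : Commute (pr (dm t)) (pr (dm s)) := by
  simp only [Commute, SemiconjBy, ← map_mul, dm_mul, add_comm]

lemma offDiag_eq_zero_of_commute_pr_dm {X : SL2} {t : ℝ} (ht : t ≠ 0)
    (h : Commute (pr X) (pr (dm t))) :
    (X : Matrix (Fin 2) (Fin 2) ℝ) 0 1 = 0 ∧ (X : Matrix (Fin 2) (Fin 2) ℝ) 1 0 = 0 := by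
  obtain ⟨r, hr, hXD⟩ := pr_eq_pr_iff.1 (by rw [map_mul, map_mul]; exact h.eq :
    pr (X * dm t) = pr (dm t * X))
  set e : Fin 2 → ℝ := ![Real.exp t, Real.exp (-t)]
  have he_pos : ∀ i, 0 < e i := fun i => by fin_cases i <;> simp [e, Real.exp_pos]
  have he : e 0 ≠ e 1 := by simpa [e, eq_neg_iff_add_eq_zero, ← two_mul] using ht
  have entry : ∀ i j, e i ≠ e j → (X : Matrix (Fin 2) (Fin 2) ℝ) i j = 0 := fun i j hij => by
    have hXij : e i * X i j = r * (X i j * e j) := by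
      simpa [coe_dm, Matrix.diagonal_mul, Matrix.mul_diagonal] using congrFun₂ hXD i j
    rcases sq_eq_one_iff.1 hr with rfl | rfl
    · have : (e i - e j) * X i j = 0 := by linear_combination hXij
      exact (mul_eq_zero.1 this).resolve_left (sub_ne_zero.2 hij)
    · have : (e i + e j) * X i j = 0 := by linear_combination hXij
      exact (mul_eq_zero.1 this).resolve_left (add_pos (he_pos i) (he_pos j)).ne'
  exact ⟨entry 0 1 he, entry 1 0 he.symm⟩

lemma exists_pr_dm_eq_of_offDiag_eq_zero {X : SL2} (h01 : (X : Matrix (Fin 2) (Fin 2) ℝ) 0 1 = 0)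
    (h10 : (X : Matrix (Fin 2) (Fin 2) ℝ) 1 0 = 0) : ∃ s, pr X = pr (dm s) := by
  have hdet : X 0 0 * X 1 1 = 1 := by
    have h := X.det_coe
    rwa [Matrix.det_fin_two, h01, h10, mul_zero, sub_zero] at h
  have h11 : X 1 1 = (X 0 0)⁻¹ := eq_inv_of_mul_eq_one_right hdet
  rcases (left_ne_zero_of_mul_eq_one hdet).lt_or_gt with hneg | hpos
  · refine ⟨Real.log (-X 0 0), pr_eq_pr_iff.2 ⟨-1, by norm_num, ?_⟩⟩
    ext i j
    fin_cases i <;> fin_cases j <;>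
      simp [coe_dm, Real.exp_neg, Real.exp_log (neg_pos.2 hneg), h01, h10, h11,
        -Real.log_neg_eq_log]
  · refine ⟨Real.log (X 0 0), pr_eq_pr_iff.2 ⟨1, by norm_num, ?_⟩⟩
    ext i j
    fin_cases i <;> fin_cases j <;> simp [coe_dm, Real.exp_neg, Real.exp_log hpos, h01, h10, h11]

lemma exists_eq_pr_dm_of_commute {x : PSL2} {t : ℝ} (ht : t ≠ 0) (h : Commute x (pr (dm t))) :
    ∃ s, x = pr (dm s) := by
  obtain ⟨X, rfl⟩ := QuotientGroup.mk'_surjective _ x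
  exact exists_pr_dm_eq_of_offDiag_eq_zero (offDiag_eq_zero_of_commute_pr_dm ht h).1
    (offDiag_eq_zero_of_commute_pr_dm ht h).2

lemma commute_of_mem_Adiag {x y : G2} (hx : x ∈ Adiag) (hy : y ∈ Adiag) : Commute x y := by
  obtain ⟨t, s, rfl⟩ := hx
  obtain ⟨t', s', rfl⟩ := hy
  exact (commute_pr_dm t t').prod (commute_pr_dm s s')

lemma mem_Adiag_of_commute {x : G2} {t s : ℝ} (ht : t ≠ 0) (hs : s ≠ 0)
    (h : Commute x (pr (dm t), pr (dm s))) : x ∈ Adiag := by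
  obtain ⟨t', ht'⟩ := exists_eq_pr_dm_of_commute ht (congrArg Prod.fst h.eq :)
  obtain ⟨s', hs'⟩ := exists_eq_pr_dm_of_commute hs (congrArg Prod.snd h.eq :)
  exact ⟨t', s', Prod.ext ht' hs'⟩

lemma mem_Adiag_of_commute_of_ne_one {x l : G2} (hl : l ∈ Adiag) (hl₁ : l.1 ≠ 1) (hl₂ : l.2 ≠ 1)
    (h : Commute x l) : x ∈ Adiag := by
  obtain ⟨t, s, rfl⟩ := hl
  refine mem_Adiag_of_commute ?_ ?_ h <;> rintro rfl <;> simp [dm_zero] at hl₁ hl₂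

lemma isClosed_Adiag : IsClosed (Adiag : Set G2) := by
  have : (Adiag : Set G2) = Set.centralizer {(pr (dm 1), pr (dm 1))} := by
    ext x
    simp only [SetLike.mem_coe, Set.mem_centralizer_iff, Set.mem_singleton_iff, forall_eq]
    exact ⟨commute_of_mem_Adiag ⟨1, 1, rfl⟩,
      fun hx => mem_Adiag_of_commute one_ne_zero one_ne_zero (Commute.symm hx)⟩
  rw [this]
  exact Set.isClosed_centralizer _

section DiscreteSubgroup

variable {H : Type*} [Group H] [TopologicalSpace H] [IsTopologicalGroup H]

lemma Subgroup.discreteTopology_map_conj (Δ : Subgroup H) [DiscreteTopology Δ] (g : H) :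
    DiscreteTopology (Δ.map (MulAut.conj g).toMonoidHom) := by
  refine isDiscrete_iff_discreteTopology.1 ?_
  rw [Subgroup.coe_map]
  exact (isDiscrete_iff_discreteTopology.2 ‹_›).image
    ((Homeomorph.mulLeft g).trans (Homeomorph.mulRight g⁻¹)).isInducing

theorem exists_isCompact_forall_commute_mul_mem [T2Space H] (Δ : Subgroup H)
    [DiscreteTopology Δ] {l : H} (hl : l ∈ Δ) {L : Set H} (hL : IsCompact L) :
    ∃ C : Set H, IsCompact C ∧ ∀ a, Commute a l → ∀ δ ∈ Δ, δ * a ∈ L →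
      ∃ c ∈ Δ, Commute c l ∧ c * a ∈ C := by
  set S : Set H := {μ | ∃ δ ∈ Δ, δ * l * δ⁻¹ = μ} ∩ (fun p => p * l * p⁻¹) '' L
  have hS : S.Finite := by
    have hK : IsCompact ((fun p => p * l * p⁻¹) '' L) := hL.image (by fun_prop)
    refine ((hK.inter_left Subgroup.isClosed_of_discrete).finite
      ((isDiscrete_iff_discreteTopology.2 ‹_›).mono Set.inter_subset_left)).subset ?_
    rintro _ ⟨⟨δ, hδ, rfl⟩, hμ⟩
    exact ⟨Δ.mul_mem (Δ.mul_mem hδ hl) (Δ.inv_mem hδ), hμ⟩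
  choose δ hδ hδμ using fun μ : S => μ.2.1
  have := hS.to_subtype
  refine ⟨⋃ μ : S, ((δ μ)⁻¹ * ·) '' L, isCompact_iUnion fun μ => hL.image (by fun_prop), ?_⟩
  intro a ha δ' hδ' hδ'a
  have hμ : δ' * l * δ'⁻¹ ∈ S := ⟨⟨δ', hδ', rfl⟩, δ' * a, hδ'a, by
    calc δ' * a * l * (δ' * a)⁻¹ = δ' * (a * l) * a⁻¹ * δ'⁻¹ := by group
      _ = δ' * l * δ'⁻¹ := by rw [ha.eq]; group⟩
  set μ : S := ⟨_, hμ⟩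
  refine ⟨(δ μ)⁻¹ * δ', Δ.mul_mem (Δ.inv_mem (hδ μ)) hδ', ?_, ?_⟩
  · calc (δ μ)⁻¹ * δ' * l = (δ μ)⁻¹ * (δ' * l * δ'⁻¹) * δ' := by group
      _ = (δ μ)⁻¹ * (δ μ * l * (δ μ)⁻¹) * δ' := by rw [hδμ μ]
      _ = l * ((δ μ)⁻¹ * δ') := by group
  · exact Set.mem_iUnion.2 ⟨μ, δ' * a, hδ'a, (mul_assoc _ _ _).symm⟩

end DiscreteSubgroup

lemma Subgroup.mem_map_conj_inv_iff {H : Type*} [Group H] {Γ : Subgroup H} {g x : H} :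
    x ∈ Γ.map (MulAut.conj g⁻¹).toMonoidHom ↔ g * x * g⁻¹ ∈ Γ := by
  rw [Subgroup.mem_map_equiv, MulAut.conj_symm_apply, inv_inv]

lemma IsIrreducibleLattice.ne_one_of_mem_map_conj {Γ : Subgroup G2} (hΓ : IsIrreducibleLattice Γ)
    {g x : G2} (hx : x ∈ Γ.map (MulAut.conj g⁻¹).toMonoidHom) (hx₁ : x ≠ 1) :
    x.1 ≠ 1 ∧ x.2 ≠ 1 := by
  rw [Subgroup.mem_map_conj_inv_iff] at hx
  constructor <;> intro h <;> apply hx₁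
  · simpa using hΓ.ker_fst _ hx (by simp [h])
  · simpa using hΓ.ker_snd _ hx (by simp [h])

lemma IsIrreducibleLattice.isClosed {Γ : Subgroup G2} (hΓ : IsIrreducibleLattice Γ) :
    IsClosed (Γ : Set G2) :=
  have := hΓ.discrete
  Subgroup.isClosed_of_discrete

lemma mem_Adiag_of_commute_of_mem_Lam {Γ : Subgroup G2} (hΓ : IsIrreducibleLattice Γ) {g l x : G2}
    (hl : l ∈ Lam Γ g) (hl₁ : l ≠ 1) (h : Commute x l) : x ∈ Adiag :=
  have hl' := hΓ.ne_one_of_mem_map_conj hl.1 hl₁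
  mem_Adiag_of_commute_of_ne_one hl.2 hl'.1 hl'.2 h

lemma rmk_eq_rmk_iff {Γ : Subgroup G2} {x y : G2} : rmk Γ x = rmk Γ y ↔ y * x⁻¹ ∈ Γ :=
  Quotient.eq.trans QuotientGroup.rightRel_apply

lemma continuous_Psi (Γ : Subgroup G2) (g : G2) : Continuous (Psi Γ g) :=
  Continuous.quotient_lift (continuous_quot_mk.comp ((continuous_const_mul g).comp
    continuous_subtype_val)) _

lemma range_Psi (Γ : Subgroup G2) (g : G2) : Set.range (Psi Γ g) = orbA Γ g := by
  ext y
  constructor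
  · rintro ⟨⟨a⟩, rfl⟩
    exact ⟨a, a.2, rfl⟩
  · rintro ⟨a, ha, rfl⟩
    exact ⟨Quotient.mk _ ⟨a, ha⟩, rfl⟩

theorem isCompact_preimage_Psi {Γ : Subgroup G2} (hΓ : IsIrreducibleLattice Γ) {g : G2}
    (hnt : Lam Γ g ≠ ⊥) {K : Set (RQ Γ)} (hK : IsCompact K) : IsCompact (Psi Γ g ⁻¹' K) := by
  have := hΓ.discrete
  have := hΓ.isClosed
  have := Γ.discreteTopology_map_conj g⁻¹
  obtain ⟨l, hlΛ, hl₁⟩ := (Lam Γ g).bot_or_exists_ne_one.resolve_left hnt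
  have hq := MulAction.isOpenQuotientMap_quotientMk (Γ := Γ) (T := G2)
  obtain ⟨L, hL, hKL⟩ := hq.isOpenMap.exists_isCompact_image_superset hq.surjective hK
  obtain ⟨C, hC, hCL⟩ := exists_isCompact_forall_commute_mul_mem _ hlΛ.1
    (hL.image (continuous_const_mul g⁻¹))
  refine IsCompact.of_isClosed_subset
    ((isClosed_Adiag.isClosedEmbedding_subtypeVal.isCompact_preimage hC).image continuous_quot_mk)
    (hK.isClosed.preimage (continuous_Psi Γ g)) ?_
  rintro ⟨a⟩ ha
  obtain ⟨p, hpL, hp⟩ := hKL ha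
  have hδ : g⁻¹ * p * (a : G2)⁻¹ ∈ Γ.map (MulAut.conj g⁻¹).toMonoidHom := by
    rw [Subgroup.mem_map_conj_inv_iff]
    simpa [mul_assoc] using Γ.inv_mem (rmk_eq_rmk_iff.1 hp)
  obtain ⟨c, hcΔ, hcl, hcC⟩ := hCL a (commute_of_mem_Adiag a.2 hlΛ.2) _ hδ
    ⟨p, hpL, (inv_mul_cancel_right _ _).symm⟩
  have hcA : c ∈ Adiag := mem_Adiag_of_commute_of_mem_Lam hΓ hlΛ hl₁ hcl
  refine ⟨⟨c, hcA⟩ * a, hcC, Quotient.sound (QuotientGroup.rightRel_apply.2 ?_)⟩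
  rw [_root_.mul_inv_rev, mul_inv_cancel_left]
  exact inv_mem (Subgroup.mem_subgroupOf.2 ⟨hcΔ, hcA⟩)

/-- **Lemma.**  For an irreducible lattice `Γ` of `G = PSL(2, ℝ) × PSL(2, ℝ)` and `g ∈ G`,
if the subgroup `g⁻¹ Γ g ∩ A` is nontrivial then the map
`Ψ_x : (g⁻¹ Γ g ∩ A) \ A → Γ \ G` is proper; in particular the orbit `x A` of `x = Γ g`
is closed in `Γ \ G`. -/
theorem psi_proper_of_Lam_nontrivial
    (Γ : Subgroup G2) (hΓ : IsIrreducibleLattice Γ) (g : G2)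
    (hnt : Lam Γ g ≠ ⊥) :
    (∀ K : Set (RQ Γ), IsCompact K → IsCompact (Psi Γ g ⁻¹' K)) ∧
      IsClosed (orbA Γ g) := by
  have hproper : ∀ K : Set (RQ Γ), IsCompact K → IsCompact (Psi Γ g ⁻¹' K) :=
    fun _ => isCompact_preimage_Psi hΓ hnt
  have := hΓ.isClosed
  rw [← range_Psi]
  exact ⟨hproper,
    (isProperMap_iff_isCompact_preimage.2 ⟨continuous_Psi Γ g, hproper⟩).isClosed_range⟩
end
end
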